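/- Suppose assumptions (A1), (A2), (A3), and (A4) hold. Then there exists a constant C > 0, depending only on γ, α, the constants of (A1)–(A2), and on the C² norm of V, but independent of ε, such that for every 0 < ε ≤ 1 and every solution (u, m) of Problem 1, one has m(x)^α ≤ C for all x; in particular sup m ≤ C^{1/α}. -/

import Mathlib

open Set intervalIntegral

noncomputable section

/-- `f : ℝ → ℝ` is ½-Hölder continuous: there is `K ≥ 0` with
`|f x - f y| ≤ K * |x - y| ^ (1/2)` for all `x y`. -/
def IsHolderHalf (f : ℝ → ℝ) : Prop :=
  ∃ K : ℝ, 0 ≤ K ∧ ∀ x y : ℝ, |f x - f y| ≤ K * |x - y| ^ ((1 : ℝ) / 2)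

/-- `f` is a 1-periodic function of class `C²` (a `C²` function on the torus `𝕋`). -/
def MemC2T (f : ℝ → ℝ) : Prop :=
  Function.Periodic f 1 ∧ ContDiff ℝ 2 f

/-- `f ∈ C^{2,1/2}(𝕋)`: 1-periodic, of class `C²`, with ½-Hölder continuous
second derivative. -/
def MemC2HalfT (f : ℝ → ℝ) : Prop :=
  MemC2T f ∧ IsHolderHalf (deriv (deriv f))

/-- `(u, m)` is a solution of Problem 1 with Hamiltonian `H`, potential `V`,
exponent `α` and parameter `ε`: `u, m` are 1-periodic `C²` functions, `m > 0`
everywhere, and the system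
`u - u'' + H(u') + V = m^α + ε (m - m'')`,
`m - m'' - (H'(u') m)' = 1 - ε (u - u'')`
holds pointwise. -/
def SolvesMFG (H V : ℝ → ℝ) (α ε : ℝ) (u m : ℝ → ℝ) : Prop :=
  MemC2T u ∧ MemC2T m ∧ (∀ x, 0 < m x) ∧
  (∀ x : ℝ, u x - deriv (deriv u) x + H (deriv u x) + V x
      = m x ^ α + ε * (m x - deriv (deriv m) x)) ∧
  (∀ x : ℝ, m x - deriv (deriv m) x
      - deriv (fun y => deriv H (deriv u y) * m y) x
      = 1 - ε * (u x - deriv (deriv u) x))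

/-- A bound `KV` on the `C²` norm of `V`. -/
def C2NormBound (KV : ℝ) (V : ℝ → ℝ) : Prop :=
  ∀ x : ℝ, |V x| ≤ KV ∧ |deriv V x| ≤ KV ∧ |deriv (deriv V) x| ≤ KV

/-!
Integrating the Fokker–Planck equation over the circle gives `∫ m + ε ∫ u = 1`, and integrating
the Hamilton–Jacobi equation gives `∫ u + ∫ H(u') + ∫ V = ∫ m^α + ε ∫ m`. Testing the
Hamilton–Jacobi equation against `m`, the Fokker–Planck equation against `u`, and subtracting,
the second-order cross terms cancel after integration by parts; with (A1), (A2) and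
`m^α ≤ 1 + m^(α+1)` this yields `ε ∫ u² + ∫ |u'|^γ + ∫ |u'|^γ m ≲ ∫ m + 1`. Together with the
mass identity and `2K|u| ≤ u² + K²`, all these integrals are bounded independently of `ε`.
Convexity and (A1) give `|H'(p)| ≲ 1 + |p|^γ`, so the drift `H'(u') m` is bounded in `L¹`.

For the pointwise bound, the Fokker–Planck equation says that the flux `m' + ε u' + H'(u') m`
has derivative `m + ε u - 1`, which is bounded in `L¹`; hence the flux, and with it `m'`, is
bounded in `L¹`. A periodic function differs from its mean by at most the `L¹` norm of its
derivative, which bounds `m`.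
-/

namespace Function.Periodic

variable {f f' : ℝ → ℝ}

theorem deriv {T : ℝ} (hf : Periodic f T) : Periodic (_root_.deriv f) T := fun x => by
  rw [← deriv_comp_add_const, hf.funext]

theorem integral_deriv_eq_zero {T : ℝ} (hf : Periodic f T)
    (hderiv : ∀ x, HasDerivAt f (f' x) x) (hint : IntervalIntegrable f' MeasureTheory.volume 0 T) :
    ∫ x in (0 : ℝ)..T, f' x = 0 := by
  rw [integral_eq_sub_of_hasDerivAt (fun x _ => hderiv x) hint, ← zero_add T, hf 0, sub_self]

theorem abs_sub_le_integral_abs_deriv (hf : Periodic f 1)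
    (hderiv : ∀ x, HasDerivAt f (f' x) x) (hf' : Continuous f') (x y : ℝ) :
    |f x - f y| ≤ ∫ t in (0 : ℝ)..1, |f' t| := by
  have hfract (z : ℝ) : f (Int.fract z) = f z := by
    simpa using hf.sub_int_mul_eq (x := z) ⌊z⌋
  have hmem (z : ℝ) : Int.fract z ∈ uIcc (0 : ℝ) 1 := by
    rw [uIcc_of_le zero_le_one]; exact ⟨Int.fract_nonneg z, (Int.fract_lt_one z).le⟩
  rw [← hfract x, ← hfract y, abs_sub_comm,
    ← integral_eq_sub_of_hasDerivAt (fun z _ => hderiv z) (hf'.intervalIntegrable _ _),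
    integral_of_le zero_le_one, ← uIoc_of_le zero_le_one]
  simpa only [Real.norm_eq_abs] using norm_integral_le_integral_norm_uIoc.trans <|
    MeasureTheory.setIntegral_mono_set (hf'.norm.integrableOn_uIoc (μ := MeasureTheory.volume))
    (Filter.Eventually.of_forall fun _ => norm_nonneg _)
    (Filter.Eventually.of_forall <| uIoc_subset_uIoc_of_uIcc_subset_uIcc <|
      uIcc_subset_uIcc (hmem x) (hmem y))

theorem abs_sub_integral_le_integral_abs_deriv (hf : Periodic f 1)
    (hderiv : ∀ x, HasDerivAt f (f' x) x) (hf' : Continuous f') (x : ℝ) :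
    |f x - ∫ y in (0 : ℝ)..1, f y| ≤ ∫ t in (0 : ℝ)..1, |f' t| := by
  have hcont : Continuous f := continuous_iff_continuousAt.2 fun x => (hderiv x).continuousAt
  calc |f x - ∫ y in (0 : ℝ)..1, f y| = |∫ y in (0 : ℝ)..1, (f x - f y)| := by
        rw [integral_sub intervalIntegrable_const (hcont.intervalIntegrable _ _)]; simp
    _ ≤ ∫ y in (0 : ℝ)..1, |f x - f y| := abs_integral_le_integral_abs zero_le_one
    _ ≤ ∫ _ in (0 : ℝ)..1, ∫ t in (0 : ℝ)..1, |f' t| :=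
        integral_mono_on zero_le_one (Continuous.intervalIntegrable (by fun_prop) _ _)
          intervalIntegrable_const fun y _ => hf.abs_sub_le_integral_abs_deriv hderiv hf' x y
    _ = ∫ t in (0 : ℝ)..1, |f' t| := by simp

end Function.Periodic

theorem Real.one_add_rpow_le {s γ : ℝ} (hs : 0 ≤ s) (hγ : 1 ≤ γ) :
    (1 + s) ^ γ ≤ 2 ^ (γ - 1) * (1 + s ^ γ) := by
  have := NNReal.coe_le_coe.2 (NNReal.rpow_add_le_mul_rpow_add_rpow 1 s.toNNReal hγ)
  push_cast [Real.coe_toNNReal _ hs] at this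
  simpa using this

theorem abs_deriv_le_of_convexOn {H : ℝ → ℝ} {γ C1 C3 p : ℝ} (hγ : 1 ≤ γ) (hC1 : 0 ≤ C1)
    (hC3 : 0 ≤ C3) (hconv : ConvexOn ℝ univ H) (hdiff : DifferentiableAt ℝ H p)
    (hlow : ∀ q, -C1 ≤ H q) (hup : ∀ q, H q ≤ C1 + C3 * |q| ^ γ) :
    |deriv H p| ≤ (2 * C1 + C3 * 2 ^ (γ - 1)) * (1 + |p| ^ γ) := by
  have hright : deriv H p ≤ H (p + 1) - H p := by
    simpa [slope_def_field] using
      hconv.deriv_le_slope (mem_univ p) (mem_univ (p + 1)) (lt_add_one p) hdiff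
  have hleft : H p - H (p - 1) ≤ deriv H p := by
    simpa [slope_def_field] using
      hconv.slope_le_deriv (mem_univ (p - 1)) (mem_univ p) (sub_one_lt p) hdiff
  have hshift (q : ℝ) (hq : |q| ≤ 1 + |p|) : H q ≤ C1 + C3 * (1 + |p|) ^ γ := by
    grw [hup q, hq]
  have h1 := hshift (p + 1) (by grw [abs_add_le, abs_one, add_comm])
  have h2 := hshift (p - 1) (by grw [abs_sub, abs_one, add_comm])
  have hle : |deriv H p| ≤ 2 * C1 + C3 * (1 + |p|) ^ γ := by
    rw [abs_le]
    constructor <;> linarith [hlow p, hlow (p - 1), hlow (p + 1)]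
  grw [hle, Real.one_add_rpow_le (abs_nonneg p) hγ]
  nlinarith [Real.rpow_nonneg (abs_nonneg p) γ]

theorem ContDiff.hasDerivAt_deriv_of_two {f : ℝ → ℝ} (hf : ContDiff ℝ 2 f) (x : ℝ) :
    HasDerivAt (deriv f) (deriv (deriv f) x) x :=
  ((hf.deriv' (n := 1)).differentiable one_ne_zero x).hasDerivAt

theorem Real.rpow_le_one_add_rpow_add_one {x α : ℝ} (hx : 0 ≤ x) (hα : 0 ≤ α) :
    x ^ α ≤ 1 + x ^ (α + 1) := by
  rcases le_total x 1 with hx1 | hx1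
  · linarith [Real.rpow_le_one hx hx1 hα, Real.rpow_nonneg hx (α + 1)]
  · linarith [Real.rpow_le_rpow_of_exponent_le hx1 (le_add_of_nonneg_right (a := α) zero_le_one)]

theorem integral_mono_of_continuous {f g : ℝ → ℝ} {a b : ℝ} (hab : a ≤ b) (hf : Continuous f)
    (hg : Continuous g) (h : ∀ x, f x ≤ g x) : ∫ x in a..b, f x ≤ ∫ x in a..b, g x :=
  integral_mono hab (hf.intervalIntegrable _ _) (hg.intervalIntegrable _ _) h

theorem integral_abs_le_one_add_integral_abs_rpow {f : ℝ → ℝ} {γ : ℝ} (hf : Continuous f)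
    (hγ : 1 ≤ γ) : ∫ x in (0 : ℝ)..1, |f x| ≤ 1 + ∫ x in (0 : ℝ)..1, |f x| ^ γ := by
  have h : ∫ x in (0 : ℝ)..1, |f x| ≤ ∫ x in (0 : ℝ)..1, (1 + |f x| ^ γ) :=
    integral_mono_of_continuous zero_le_one (by fun_prop)
      (by fun_prop (disch := positivity)) fun x => by
        rcases le_total |f x| 1 with h | h
        · linarith [Real.rpow_nonneg (abs_nonneg (f x)) γ]
        · linarith [Real.self_le_rpow_of_one_le h hγ]
  rwa [integral_add intervalIntegrable_const
    (Continuous.intervalIntegrable (by fun_prop (disch := positivity)) _ _),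
    integral_const, sub_zero, one_smul] at h

namespace SolvesMFG

variable {H V u m : ℝ → ℝ} {α ε : ℝ}

theorem hasDerivAt_drift (hs : SolvesMFG H V α ε u m) (hH : ContDiff ℝ 2 H) (x : ℝ) :
    HasDerivAt (fun y => deriv H (deriv u y) * m y)
      (deriv (fun y => deriv H (deriv u y) * m y) x) x :=
  ((((hH.deriv' (n := 1)).comp (hs.1.2.deriv' (n := 1))).mul
    (hs.2.1.2.of_le one_le_two)).differentiable one_ne_zero x).hasDerivAt

theorem hasDerivAt_flux (hs : SolvesMFG H V α ε u m) (hH : ContDiff ℝ 2 H) (x : ℝ) :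
    HasDerivAt (fun y => deriv m y + ε * deriv u y + deriv H (deriv u y) * m y)
      (m x + ε * u x - 1) x := by
  refine (((hs.2.1.2.hasDerivAt_deriv_of_two x).add
    ((hs.1.2.hasDerivAt_deriv_of_two x).const_mul ε)).add (hs.hasDerivAt_drift hH x)).congr_deriv ?_
  linear_combination -hs.2.2.2.2 x

theorem periodic_flux (hs : SolvesMFG H V α ε u m) :
    Function.Periodic (fun y => deriv m y + ε * deriv u y + deriv H (deriv u y) * m y) 1 := by
  obtain ⟨⟨hu, -⟩, ⟨hm, -⟩, -⟩ := hs
  intro x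
  simp only [hu.deriv x, hm.deriv x, hm x]

theorem integral_add_mul_integral_eq_one (hs : SolvesMFG H V α ε u m) (hH : ContDiff ℝ 2 H) :
    (∫ x in (0 : ℝ)..1, m x) + ε * ∫ x in (0 : ℝ)..1, u x = 1 := by
  have hu := hs.1.2.continuous
  have hm := hs.2.1.2.continuous
  have h := hs.periodic_flux.integral_deriv_eq_zero (hs.hasDerivAt_flux hH)
    (Continuous.intervalIntegrable (by fun_prop) _ _)
  simp (disch := exact Continuous.intervalIntegrable (by fun_prop) _ _) only
    [integral_add, integral_sub, integral_const_mul, integral_const, sub_zero, one_smul] at h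
  linarith

theorem integral_hjb (hs : SolvesMFG H V α ε u m) (hH : Continuous H) (hV : Continuous V) :
    (∫ x in (0 : ℝ)..1, u x) + (∫ x in (0 : ℝ)..1, H (deriv u x)) + ∫ x in (0 : ℝ)..1, V x
      = (∫ x in (0 : ℝ)..1, m x ^ α) + ε * ∫ x in (0 : ℝ)..1, m x := by
  obtain ⟨⟨huper, hu2⟩, ⟨hmper, hm2⟩, hpos, hhjb, -⟩ := hs
  have hu := hu2.continuous
  have hm := hm2.continuous
  have hu' := hu2.continuous_deriv one_le_two
  have hmα : Continuous fun x => m x ^ α := hm.rpow_const fun x => Or.inl (hpos x).ne'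
  have hderiv (x : ℝ) : HasDerivAt (fun y => deriv u y - ε * deriv m y)
      (u x + H (deriv u x) + V x - m x ^ α - ε * m x) x := by
    refine ((hu2.hasDerivAt_deriv_of_two x).sub
      ((hm2.hasDerivAt_deriv_of_two x).const_mul ε)).congr_deriv ?_
    linear_combination -hhjb x
  have hper : Function.Periodic (fun y => deriv u y - ε * deriv m y) 1 := fun x => by
    simp only [huper.deriv x, hmper.deriv x]
  have h := hper.integral_deriv_eq_zero hderiv (Continuous.intervalIntegrable (by fun_prop) _ _)
  simp (disch := exact Continuous.intervalIntegrable (by fun_prop) _ _) only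
    [integral_add, integral_sub, integral_const_mul] at h
  linarith

theorem integral_energy_identity (hs : SolvesMFG H V α ε u m) (hH : ContDiff ℝ 2 H)
    (hV : Continuous V) :
    (∫ x in (0 : ℝ)..1, m x ^ (α + 1))
      + (∫ x in (0 : ℝ)..1, (deriv u x * deriv H (deriv u x) - H (deriv u x)) * m x)
      + ε * (∫ x in (0 : ℝ)..1, (m x ^ 2 + deriv m x ^ 2 + deriv u x ^ 2))
      + ε * (∫ x in (0 : ℝ)..1, u x ^ 2)
      = (∫ x in (0 : ℝ)..1, V x * m x) + ∫ x in (0 : ℝ)..1, u x := by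
  have hq := hs.hasDerivAt_drift hH
  obtain ⟨⟨huper, hu2⟩, ⟨hmper, hm2⟩, hpos, hhjb, hfp⟩ := hs
  have hu := hu2.continuous
  have hm := hm2.continuous
  have hu' := hu2.continuous_deriv one_le_two
  have hm' := hm2.continuous_deriv one_le_two
  have hH0 := hH.continuous
  have hH' := hH.continuous_deriv one_le_two
  have hmα : Continuous fun x => m x ^ (α + 1) :=
    hm.rpow_const fun x => Or.inl (hpos x).ne'
  -- an antiderivative of `m · (HJB) - u · (FP)`
  have hderiv (x : ℝ) : HasDerivAt (fun y => deriv m y * u y - deriv u y * m y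
        + ε * (deriv m y * m y) + deriv H (deriv u y) * m y * u y + ε * (deriv u y * u y))
      (m x ^ (α + 1) + (deriv u x * deriv H (deriv u x) - H (deriv u x)) * m x
        + ε * (m x ^ 2 + deriv m x ^ 2 + deriv u x ^ 2) + ε * u x ^ 2
        - (V x * m x + u x)) x := by
    have hu₁ := hu2.hasDerivAt_deriv_of_two x
    have hm₁ := hm2.hasDerivAt_deriv_of_two x
    have hu₀ := (hu2.differentiable two_ne_zero x).hasDerivAt
    have hm₀ := (hm2.differentiable two_ne_zero x).hasDerivAt
    refine (((((hm₁.mul hu₀).sub (hu₁.mul hm₀)).add ((hm₁.mul hm₀).const_mul ε)).add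
      ((hq x).mul hu₀)).add ((hu₁.mul hu₀).const_mul ε)).congr_deriv ?_
    linear_combination m x * hhjb x - u x * hfp x - Real.rpow_add_one (hpos x).ne' α
  have hper : Function.Periodic (fun y => deriv m y * u y - deriv u y * m y
      + ε * (deriv m y * m y) + deriv H (deriv u y) * m y * u y + ε * (deriv u y * u y)) 1 :=
    fun x => by simp only [huper.deriv x, hmper.deriv x, huper x, hmper x]
  have h := hper.integral_deriv_eq_zero hderiv (Continuous.intervalIntegrable (by fun_prop) _ _)
  simp (disch := exact Continuous.intervalIntegrable (by fun_prop) _ _) only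
    [integral_add, integral_sub, integral_const_mul] at h ⊢
  linarith

theorem energy_estimate (hs : SolvesMFG H V α ε u m) (hH : ContDiff ℝ 2 H) (hV : Continuous V)
    {γ KV C1 C2 tC1 tC2 : ℝ} (hα : 0 ≤ α) (hγ : 0 ≤ γ) (hε : 0 ≤ ε) (hε1 : ε ≤ 1)
    (hVb : ∀ x, |V x| ≤ KV) (hHlow : ∀ p, -C1 + C2 * |p| ^ γ ≤ H p)
    (hLlow : ∀ p, -tC1 + tC2 * |p| ^ γ ≤ p * deriv H p - H p) :
    ε * (∫ x in (0 : ℝ)..1, u x ^ 2) + C2 * (∫ x in (0 : ℝ)..1, |deriv u x| ^ γ)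
        + tC2 * (∫ x in (0 : ℝ)..1, |deriv u x| ^ γ * m x)
      ≤ (KV + tC1 + 1) * (∫ x in (0 : ℝ)..1, m x) + (C1 + KV + 1) := by
  have hE := hs.integral_energy_identity hH hV
  have hB := hs.integral_hjb hH.continuous hV
  obtain ⟨⟨-, hu2⟩, ⟨-, hm2⟩, hpos, -⟩ := hs
  have hu := hu2.continuous
  have hm := hm2.continuous
  have hu' := hu2.continuous_deriv one_le_two
  have hm' := hm2.continuous_deriv one_le_two
  have hH0 := hH.continuous
  have hH' := hH.continuous_deriv one_le_two
  have hmα : Continuous fun x => m x ^ α := hm.rpow_const fun x => Or.inl (hpos x).ne'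
  have hmα1 : Continuous fun x => m x ^ (α + 1) := hm.rpow_const fun x => Or.inl (hpos x).ne'
  have hpow : ∫ x in (0 : ℝ)..1, m x ^ α ≤ ∫ x in (0 : ℝ)..1, (1 + m x ^ (α + 1)) :=
    integral_mono_of_continuous zero_le_one hmα (by fun_prop) fun x =>
      Real.rpow_le_one_add_rpow_add_one (hpos x).le hα
  have hL : ∫ x in (0 : ℝ)..1, (-tC1 * m x + tC2 * (|deriv u x| ^ γ * m x))
      ≤ ∫ x in (0 : ℝ)..1, (deriv u x * deriv H (deriv u x) - H (deriv u x)) * m x :=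
    integral_mono_of_continuous zero_le_one (by fun_prop (disch := assumption)) (by fun_prop)
      fun x => by linarith [mul_le_mul_of_nonneg_right (hLlow (deriv u x)) (hpos x).le]
  have hHb : ∫ x in (0 : ℝ)..1, (-C1 + C2 * |deriv u x| ^ γ) ≤ ∫ x in (0 : ℝ)..1, H (deriv u x) :=
    integral_mono_of_continuous zero_le_one (by fun_prop (disch := assumption)) (by fun_prop)
      fun x => hHlow (deriv u x)
  have hVm : ∫ x in (0 : ℝ)..1, V x * m x ≤ ∫ x in (0 : ℝ)..1, KV * m x :=
    integral_mono_of_continuous zero_le_one (by fun_prop) (by fun_prop) fun x =>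
      mul_le_mul_of_nonneg_right ((le_abs_self _).trans (hVb x)) (hpos x).le
  have hV0 : ∫ _ in (0 : ℝ)..1, -KV ≤ ∫ x in (0 : ℝ)..1, V x :=
    integral_mono_of_continuous zero_le_one (by fun_prop) hV fun x => neg_le_of_abs_le (hVb x)
  have hJ : 0 ≤ ∫ x in (0 : ℝ)..1, (m x ^ 2 + deriv m x ^ 2 + deriv u x ^ 2) :=
    integral_nonneg zero_le_one fun x _ => by positivity
  have hm0 : 0 ≤ ∫ x in (0 : ℝ)..1, m x := integral_nonneg zero_le_one fun x _ => (hpos x).le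
  simp (disch := exact Continuous.intervalIntegrable (by fun_prop (disch := assumption)) _ _) only
    [integral_add, integral_const_mul, integral_const, sub_zero, one_smul] at hpow hL hHb hVm hV0
  linarith [mul_nonneg hε hJ, mul_nonneg (sub_nonneg.2 hε1) hm0]

theorem mass_estimate (hs : SolvesMFG H V α ε u m) (hH : ContDiff ℝ 2 H) (hε : 0 ≤ ε)
    (hε1 : ε ≤ 1) {K R : ℝ} (hK : 0 < K)
    (henergy : ε * (∫ x in (0 : ℝ)..1, u x ^ 2) ≤ K * (∫ x in (0 : ℝ)..1, m x) + R) :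
    ∫ x in (0 : ℝ)..1, m x ≤ 2 + K + R / K ∧ ε * ∫ x in (0 : ℝ)..1, |u x| ≤ 1 + K + R / K := by
  have hmass := hs.integral_add_mul_integral_eq_one hH
  have hu := hs.1.2.continuous
  have habs : -∫ x in (0 : ℝ)..1, |u x| ≤ ∫ x in (0 : ℝ)..1, u x :=
    neg_le_of_abs_le (abs_integral_le_integral_abs zero_le_one)
  have hamgm : ∫ x in (0 : ℝ)..1, 2 * K * |u x| ≤ ∫ x in (0 : ℝ)..1, (u x ^ 2 + K ^ 2) :=
    integral_mono_of_continuous zero_le_one (by fun_prop) (by fun_prop) fun x => by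
      nlinarith [sq_nonneg (|u x| - K), sq_abs (u x)]
  simp (disch := exact Continuous.intervalIntegrable (by fun_prop) _ _) only
    [integral_add, integral_const_mul, integral_const, sub_zero, one_smul] at hamgm
  have hεu : ε * ∫ x in (0 : ℝ)..1, |u x| ≤ 1 + K + R / K := by
    rw [← mul_le_mul_iff_of_pos_left hK, mul_add, mul_div_cancel₀ _ hK.ne']
    nlinarith [mul_le_mul_of_nonneg_left hamgm hε, mul_le_mul_of_nonneg_left habs hε,
      mul_le_of_le_one_left (sq_nonneg K) hε1]
  constructor <;> nlinarith [mul_le_mul_of_nonneg_left habs hε]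

theorem le_integral_bound (hs : SolvesMFG H V α ε u m) (hH : ContDiff ℝ 2 H) (hε : 0 ≤ ε)
    (x : ℝ) :
    m x ≤ 1 + 2 * (∫ y in (0 : ℝ)..1, m y) + ε * (∫ y in (0 : ℝ)..1, |u y|)
      + ε * (∫ y in (0 : ℝ)..1, |deriv u y|)
      + 2 * ∫ y in (0 : ℝ)..1, |deriv H (deriv u y) * m y| := by
  have hflux := hs.hasDerivAt_flux hH
  have hfluxper := hs.periodic_flux
  obtain ⟨⟨huper, hu2⟩, ⟨hmper, hm2⟩, hpos, -⟩ := hs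
  have hu := hu2.continuous
  have hm := hm2.continuous
  have hu' := hu2.continuous_deriv one_le_two
  have hm' := hm2.continuous_deriv one_le_two
  have hH' := hH.continuous_deriv one_le_two
  have hmean_u' : ∫ y in (0 : ℝ)..1, deriv u y = 0 := huper.integral_deriv_eq_zero
    (fun y => (hu2.differentiable two_ne_zero y).hasDerivAt) (hu'.intervalIntegrable _ _)
  have hmean_m' : ∫ y in (0 : ℝ)..1, deriv m y = 0 := hmper.integral_deriv_eq_zero
    (fun y => (hm2.differentiable two_ne_zero y).hasDerivAt) (hm'.intervalIntegrable _ _)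
  have hmean_flux : ∫ y in (0 : ℝ)..1, (deriv m y + ε * deriv u y + deriv H (deriv u y) * m y)
      = ∫ y in (0 : ℝ)..1, deriv H (deriv u y) * m y := by
    simp (disch := exact Continuous.intervalIntegrable (by fun_prop) _ _) only
      [integral_add, integral_const_mul, hmean_u', hmean_m']
    ring
  have hflux_le (y : ℝ) : |deriv m y + ε * deriv u y + deriv H (deriv u y) * m y|
      ≤ (∫ z in (0 : ℝ)..1, |deriv H (deriv u z) * m z|)
        + ∫ z in (0 : ℝ)..1, |m z + ε * u z - 1| := by
    have hosc := hfluxper.abs_sub_integral_le_integral_abs_deriv hflux (by fun_prop) y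
    rw [hmean_flux] at hosc
    linarith [abs_sub_abs_le_abs_sub (deriv m y + ε * deriv u y + deriv H (deriv u y) * m y)
      (∫ z in (0 : ℝ)..1, deriv H (deriv u z) * m z),
      abs_integral_le_integral_abs (f := fun z => deriv H (deriv u z) * m z)
        (μ := MeasureTheory.volume) zero_le_one]
  have hosc_m := hmper.abs_sub_integral_le_integral_abs_deriv
    (fun y => (hm2.differentiable two_ne_zero y).hasDerivAt) hm' x
  have h1 : ∫ y in (0 : ℝ)..1, |deriv m y|
      ≤ ∫ y in (0 : ℝ)..1, ((∫ z in (0 : ℝ)..1, |deriv H (deriv u z) * m z|)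
        + (∫ z in (0 : ℝ)..1, |m z + ε * u z - 1|) + ε * |deriv u y|
        + |deriv H (deriv u y) * m y|) :=
    integral_mono_of_continuous zero_le_one (by fun_prop) (by fun_prop) fun y => by
      have h := abs_le.1 (hflux_le y)
      have h₁ := mul_le_mul_of_nonneg_left (le_abs_self (deriv u y)) hε
      have h₂ := mul_le_mul_of_nonneg_left (neg_abs_le (deriv u y)) hε
      have h₃ := le_abs_self (deriv H (deriv u y) * m y)
      have h₄ := neg_abs_le (deriv H (deriv u y) * m y)
      exact abs_le.2 ⟨by linarith, by linarith⟩
  have h2 : ∫ y in (0 : ℝ)..1, |m y + ε * u y - 1| ≤ ∫ y in (0 : ℝ)..1, (m y + ε * |u y| + 1) :=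
    integral_mono_of_continuous zero_le_one (by fun_prop) (by fun_prop) fun y => by
      have h₁ := mul_le_mul_of_nonneg_left (le_abs_self (u y)) hε
      have h₂ := mul_le_mul_of_nonneg_left (neg_abs_le (u y)) hε
      exact abs_le.2 ⟨by linarith [hpos y], by linarith [hpos y]⟩
  simp (disch := exact Continuous.intervalIntegrable (by fun_prop) _ _) only
    [integral_add, integral_const_mul, integral_const, sub_zero, one_smul] at h1 h2
  linarith [abs_le.1 hosc_m]

theorem integral_abs_drift_le (hs : SolvesMFG H V α ε u m) (hH : ContDiff ℝ 2 H)
    (hconv : ConvexOn ℝ univ H) {γ C1 C3 : ℝ} (hγ : 1 ≤ γ) (hC1 : 0 ≤ C1) (hC3 : 0 ≤ C3)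
    (hlow : ∀ p, -C1 ≤ H p) (hup : ∀ p, H p ≤ C1 + C3 * |p| ^ γ) :
    ∫ x in (0 : ℝ)..1, |deriv H (deriv u x) * m x|
      ≤ (2 * C1 + C3 * 2 ^ (γ - 1))
        * ((∫ x in (0 : ℝ)..1, m x) + ∫ x in (0 : ℝ)..1, |deriv u x| ^ γ * m x) := by
  have hpos := hs.2.2.1
  have hu' := hs.1.2.continuous_deriv one_le_two
  have hm := hs.2.1.2.continuous
  have hH' := hH.continuous_deriv one_le_two
  have h : ∫ x in (0 : ℝ)..1, |deriv H (deriv u x) * m x|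
      ≤ ∫ x in (0 : ℝ)..1, (2 * C1 + C3 * 2 ^ (γ - 1)) * (m x + |deriv u x| ^ γ * m x) :=
    integral_mono_of_continuous zero_le_one (by fun_prop)
      (by fun_prop (disch := positivity)) fun x => by
        have := abs_deriv_le_of_convexOn hγ hC1 hC3 hconv (hH.differentiable two_ne_zero _)
          hlow hup (p := deriv u x)
        rw [abs_mul, abs_of_pos (hpos x)]
        linarith [mul_le_mul_of_nonneg_right this (hpos x).le]
  simpa (disch := exact Continuous.intervalIntegrable (by fun_prop (disch := positivity)) _ _)
    only [integral_add, integral_const_mul] using h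

end SolvesMFG

/-- `M` bounds `∫ m` (`mass_estimate`); `E` bounds `C2 ∫ |u'|^γ` and `tC2 ∫ |u'|^γ m`
(`energy_estimate`); `2 * C1 + C3 * 2 ^ (γ - 1)` is the growth constant of `H'`. -/
def supBound (γ C1 C2 C3 tC1 tC2 KV : ℝ) : ℝ :=
  let K := KV + tC1 + 1
  let M := 2 + K + (C1 + KV + 1) / K
  let E := K * M + (C1 + KV + 1)
  1 + 3 * M + E / C2 + 2 * (2 * C1 + C3 * 2 ^ (γ - 1)) * (M + E / tC2)

theorem SolvesMFG.le_supBound {H V u m : ℝ → ℝ} {α ε : ℝ} (hs : SolvesMFG H V α ε u m)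
    (hH : ContDiff ℝ 2 H) (hconv : ConvexOn ℝ univ H) (hV : Continuous V)
    {γ KV C1 C2 C3 tC1 tC2 : ℝ} (hα : 0 ≤ α) (hγ : 1 ≤ γ) (hC1 : 0 ≤ C1) (hC2 : 0 < C2)
    (hC3 : 0 ≤ C3) (htC1 : 0 ≤ tC1) (htC2 : 0 < tC2) (hε : 0 ≤ ε) (hε1 : ε ≤ 1)
    (hVb : ∀ x, |V x| ≤ KV) (hgrowth : ∀ p, -C1 + C2 * |p| ^ γ ≤ H p ∧ H p ≤ C1 + C3 * |p| ^ γ)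
    (hLlow : ∀ p, -tC1 + tC2 * |p| ^ γ ≤ p * deriv H p - H p) (x : ℝ) :
    m x ≤ supBound γ C1 C2 C3 tC1 tC2 KV := by
  have hpos := hs.2.2.1
  have hu' := hs.1.2.continuous_deriv one_le_two
  have hG0 : 0 ≤ ∫ y in (0 : ℝ)..1, |deriv u y| ^ γ :=
    integral_nonneg zero_le_one fun y _ => by positivity
  have hGm0 : 0 ≤ ∫ y in (0 : ℝ)..1, |deriv u y| ^ γ * m y :=
    integral_nonneg zero_le_one fun y _ => mul_nonneg (by positivity) (hpos y).le
  have hu'0 : 0 ≤ ∫ y in (0 : ℝ)..1, |deriv u y| :=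
    integral_nonneg zero_le_one fun y _ => abs_nonneg _
  have hu2 : 0 ≤ ε * ∫ y in (0 : ℝ)..1, u y ^ 2 :=
    mul_nonneg hε (integral_nonneg zero_le_one fun y _ => sq_nonneg _)
  have hKV : 0 ≤ KV := (abs_nonneg _).trans (hVb 0)
  have hHlow (p : ℝ) : -C1 ≤ H p := by
    linarith [(hgrowth p).1, mul_nonneg hC2.le (Real.rpow_nonneg (abs_nonneg p) γ)]
  set K := KV + tC1 + 1
  set R := C1 + KV + 1
  set M := 2 + K + R / K
  set E := K * M + R
  set A := 2 * C1 + C3 * 2 ^ (γ - 1)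
  show m x ≤ 1 + 3 * M + E / C2 + 2 * A * (M + E / tC2)
  have hK : 0 < K := by positivity
  have hA : 0 ≤ A := by positivity
  have henergy := hs.energy_estimate hH hV hα (by linarith) hε hε1 hVb (fun p => (hgrowth p).1)
    hLlow
  obtain ⟨hIm, hIu⟩ := hs.mass_estimate hH hε hε1 hK (R := R)
    (by linarith [mul_nonneg hC2.le hG0, mul_nonneg htC2.le hGm0])
  have hKIm := mul_le_mul_of_nonneg_left hIm hK.le
  have hG : ∫ y in (0 : ℝ)..1, |deriv u y| ^ γ ≤ E / C2 := by
    rw [le_div_iff₀' hC2]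
    linarith [mul_nonneg htC2.le hGm0]
  have hGm : ∫ y in (0 : ℝ)..1, |deriv u y| ^ γ * m y ≤ E / tC2 := by
    rw [le_div_iff₀' htC2]
    linarith [mul_nonneg hC2.le hG0]
  have hdrift := hs.integral_abs_drift_le hH hconv hγ hC1 hC3 hHlow fun p => (hgrowth p).2
  have hεu' : ε * ∫ y in (0 : ℝ)..1, |deriv u y| ≤ 1 + E / C2 := by
    linarith [mul_le_of_le_one_left hu'0 hε1, integral_abs_le_one_add_integral_abs_rpow hu' hγ]
  have hq : ∫ y in (0 : ℝ)..1, |deriv H (deriv u y) * m y| ≤ A * (M + E / tC2) :=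
    hdrift.trans (mul_le_mul_of_nonneg_left (add_le_add hIm hGm) hA)
  linarith [hs.le_integral_bound hH hε x]

theorem sup_bound_on_m
    (α γ C1 C2 C3 tC1 tC2 tC3 KV : ℝ)
    (hα : 0 < α) (hγ : 1 < γ)
    (hC1 : 0 < C1) (hC2 : 0 < C2) (hC3 : 0 < C3)
    (htC1 : 0 < tC1) (htC2 : 0 < tC2) :
    ∃ C > 0, ∀ H V : ℝ → ℝ, ContDiff ℝ 2 H → ConvexOn ℝ Set.univ H →
      Function.Periodic V 1 → ContDiff ℝ 2 V → C2NormBound KV V →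
      (∀ p : ℝ, -C1 + C2 * |p| ^ γ ≤ H p ∧ H p ≤ C1 + C3 * |p| ^ γ) →
      (∀ p : ℝ, -tC1 + tC2 * |p| ^ γ ≤ p * deriv H p - H p ∧
          p * deriv H p - H p ≤ tC1 + tC3 * |p| ^ γ) →
      ∀ ε : ℝ, 0 < ε → ε ≤ 1 → ∀ u m : ℝ → ℝ, SolvesMFG H V α ε u m →
        (∀ x : ℝ, m x ^ α ≤ C) ∧ (∀ x : ℝ, m x ≤ C ^ (1 / α)) := by
  -- `supBound` can be nonpositive when `KV < 0`, but then no `V` satisfies `C2NormBound KV V`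
  set B := max 1 (supBound γ C1 C2 C3 tC1 tC2 KV)
  refine ⟨B ^ α, by positivity, fun H V hH hconv _ hV hVb hA1 hA2 ε hε hε1 u m hs => ?_⟩
  have hm (x : ℝ) : m x ≤ B :=
    (hs.le_supBound hH hconv hV.continuous hα.le hγ.le hC1.le hC2 hC3.le htC1.le htC2 hε.le hε1
      (fun x => (hVb x).1) hA1 (fun p => (hA2 p).1) x).trans (le_max_right _ _)
  refine ⟨fun x => Real.rpow_le_rpow (hs.2.2.1 x).le (hm x) hα.le, fun x => ?_⟩
  rw [← Real.rpow_mul (by positivity), mul_one_div_cancel hα.ne', Real.rpow_one]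
  exact hm x
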